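/- The completely positive cone CP^n is the dual of the copositive cone: CP^n = { A ∈ S^n : ⟨A, B⟩ ≥ 0 for all B ∈ COP^n }, where ⟨A,B⟩ = Trace(AB). -/

import Mathlib

open Matrix

/-- The cone of completely positive `n × n` matrices. -/
def completelyPositive {n : ℕ} (A : Matrix (Fin n) (Fin n) ℝ) : Prop :=
  ∃ (m : ℕ) (α : Fin m → ℝ) (x : Fin m → Fin n → ℝ),
    (∀ i, 0 ≤ α i) ∧ (∀ i j, 0 ≤ x i j) ∧
    A = ∑ i, α i • vecMulVec (x i) (x i)

/-- The cone of copositive `n × n` matrices (as a predicate on symmetric matrices). -/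
def copositive {n : ℕ} (B : Matrix (Fin n) (Fin n) ℝ) : Prop :=
  ∀ x : Fin n → ℝ, (∀ i, 0 ≤ x i) → 0 ≤ x ⬝ᵥ B.mulVec x

namespace CPAux

variable {n : ℕ}

lemma trace_vmv (x : Fin n → ℝ) (B : Matrix (Fin n) (Fin n) ℝ) :
    Matrix.trace (vecMulVec x x * B) = x ⬝ᵥ B.mulVec x := by
  simp only [Matrix.trace, Matrix.diag, Matrix.mul_apply, vecMulVec_apply, dotProduct,
    Matrix.mulVec, Finset.mul_sum]
  rw [Finset.sum_comm]
  exact Finset.sum_congr rfl fun k _ => Finset.sum_congr rfl fun j _ => by ring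

lemma cp_isSymm {A : Matrix (Fin n) (Fin n) ℝ} (h : completelyPositive A) : A.IsSymm := by
  obtain ⟨m, α, x, -, -, rfl⟩ := h
  unfold Matrix.IsSymm
  rw [Matrix.transpose_sum]
  refine Finset.sum_congr rfl fun i _ => ?_
  rw [Matrix.transpose_smul]
  congr 1
  ext a b
  simp [vecMulVec_apply, mul_comm]

lemma cp_zero : completelyPositive (0 : Matrix (Fin n) (Fin n) ℝ) :=
  ⟨0, ![], ![], by simp, by simp, by simp⟩

lemma cp_smul {c : ℝ} (hc : 0 ≤ c) {A : Matrix (Fin n) (Fin n) ℝ}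
    (h : completelyPositive A) : completelyPositive (c • A) := by
  obtain ⟨m, α, x, hα, hx, rfl⟩ := h
  exact ⟨m, fun i => c * α i, x, fun i => mul_nonneg hc (hα i), hx, by
    rw [Finset.smul_sum]; exact Finset.sum_congr rfl fun i _ => by rw [smul_smul]⟩

lemma cp_add {A B : Matrix (Fin n) (Fin n) ℝ}
    (hA : completelyPositive A) (hB : completelyPositive B) : completelyPositive (A + B) := by
  obtain ⟨m₁, α, x, hα, hx, rfl⟩ := hA
  obtain ⟨m₂, β, y, hβ, hy, rfl⟩ := hB
  refine ⟨m₁ + m₂, Fin.append α β, Fin.append x y, ?_, ?_, ?_⟩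
  · intro i
    refine Fin.addCases (fun j => ?_) (fun j => ?_) i
    · simpa using hα j
    · simpa using hβ j
  · intro i
    refine Fin.addCases (fun j => ?_) (fun j => ?_) i
    · simpa using hx j
    · simpa using hy j
  · rw [Fin.sum_univ_add]
    simp

/-- The compact "base" of the cone. -/
def Δ : Set (Matrix (Fin n) (Fin n) ℝ) :=
  {M | ∃ x : Fin n → ℝ, (∀ i, 0 ≤ x i) ∧ (∑ i, x i ^ 2) = 1 ∧ M = vecMulVec x x}

lemma isCompact_Δ : IsCompact (Δ (n := n)) := by
  have h1 : Δ (n := n) = (fun x : Fin n → ℝ => vecMulVec x x) ''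
      {x | (∀ i, 0 ≤ x i) ∧ (∑ i, x i ^ 2) = 1} := by
    ext M
    constructor
    · rintro ⟨x, h1, h2, rfl⟩; exact ⟨x, ⟨h1, h2⟩, rfl⟩
    · rintro ⟨x, ⟨h1, h2⟩, rfl⟩; exact ⟨x, h1, h2, rfl⟩
  rw [h1]
  have hcont : Continuous (fun x : Fin n → ℝ => vecMulVec x x) := by
    refine continuous_pi fun i => continuous_pi fun j => ?_
    simp only [vecMulVec_apply]
    exact (continuous_apply i).mul (continuous_apply j)
  refine (IsCompact.image ?_ hcont)
  have hclosed : IsClosed {x : Fin n → ℝ | (∀ i, 0 ≤ x i) ∧ (∑ i, x i ^ 2) = 1} := by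
    have : {x : Fin n → ℝ | (∀ i, 0 ≤ x i) ∧ (∑ i, x i ^ 2) = 1} =
        (⋂ i, {x : Fin n → ℝ | 0 ≤ x i}) ∩ {x | (∑ i, x i ^ 2) = 1} := by
      ext x; simp [Set.mem_iInter]
    rw [this]
    apply IsClosed.inter
    · exact isClosed_iInter fun i => isClosed_le continuous_const (continuous_apply i)
    · exact isClosed_eq (by fun_prop) continuous_const
  have hsub : {x : Fin n → ℝ | (∀ i, 0 ≤ x i) ∧ (∑ i, x i ^ 2) = 1} ⊆
      Set.univ.pi fun _ : Fin n => Set.Icc (-1 : ℝ) 1 := by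
    rintro x ⟨hx0, hx1⟩ i _
    have h2 : x i ^ 2 ≤ 1 := by
      rw [← hx1]
      exact Finset.single_le_sum (f := fun j => x j ^ 2) (fun j _ => sq_nonneg _) (Finset.mem_univ i)
    constructor
    · linarith [hx0 i]
    · nlinarith [hx0 i]
  exact IsCompact.of_isClosed_subset (isCompact_univ_pi fun _ => isCompact_Icc) hclosed hsub

lemma trace_eq_one_of_mem_Δ {M : Matrix (Fin n) (Fin n) ℝ} (h : M ∈ Δ) :
    Matrix.trace M = 1 := by
  obtain ⟨x, -, hx1, rfl⟩ := h
  simp only [Matrix.trace, Matrix.diag, vecMulVec_apply]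
  simpa [sq] using hx1

def N (n : ℕ) : ℕ := n * n + 1

/-- the compact convex base set -/
def S (n : ℕ) : Set (Matrix (Fin n) (Fin n) ℝ) :=
  (fun p : (Fin (N n) → ℝ) × (Fin (N n) → Matrix (Fin n) (Fin n) ℝ) => ∑ i, p.1 i • p.2 i) ''
    ((stdSimplex ℝ (Fin (N n))) ×ˢ (Set.univ.pi fun _ => Δ))

lemma isCompact_S : IsCompact (S n) := by
  refine IsCompact.image ((isCompact_stdSimplex _ _).prod (isCompact_univ_pi fun _ => isCompact_Δ)) ?_
  exact continuous_finset_sum _ fun i _ =>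
    ((continuous_apply i).comp continuous_fst).smul ((continuous_apply i).comp continuous_snd)

lemma trace_eq_one_of_mem_S {M : Matrix (Fin n) (Fin n) ℝ} (h : M ∈ S n) :
    Matrix.trace M = 1 := by
  obtain ⟨⟨w, z⟩, ⟨hw, hz⟩, rfl⟩ := h
  simp only [Matrix.trace_sum, Matrix.trace_smul]
  have : ∀ i, Matrix.trace (z i) = 1 := fun i => trace_eq_one_of_mem_Δ (hz i (Set.mem_univ i))
  simp only [this, smul_eq_mul, mul_one]
  exact hw.2

lemma cp_of_mem_S {M : Matrix (Fin n) (Fin n) ℝ} (h : M ∈ S n) : completelyPositive M := by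
  obtain ⟨⟨w, z⟩, ⟨hw, hz⟩, rfl⟩ := h
  choose x hx0 hx1 hxz using fun i => hz i (Set.mem_univ i)
  exact ⟨N n, w, x, hw.1, fun i => hx0 i, Finset.sum_congr rfl fun i _ => by rw [hxz i]⟩

lemma pad_sum {M : Type*} [AddCommMonoid M] {m Nn : ℕ} (hm : m ≤ Nn) (f : Fin m → M) :
    ∑ j : Fin Nn, (if h : (j : ℕ) < m then f ⟨j, h⟩ else 0) = ∑ i : Fin m, f i := by
  rw [← Finset.sum_subset (Finset.subset_univ (Finset.univ.map (Fin.castLEEmb hm)))]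
  · rw [Finset.sum_map]
    refine Finset.sum_congr rfl fun i _ => ?_
    rw [dif_pos (by simpa using i.isLt)]
    congr 1
  · intro j _ hj
    rw [dif_neg]
    intro h
    refine hj ?_
    simp only [Finset.mem_map, Finset.mem_univ, true_and]
    exact ⟨⟨j, h⟩, by simp [Fin.castLEEmb]⟩

lemma mem_Δ_default (hn : 0 < n) : vecMulVec (fun j => if j = ⟨0, hn⟩ then (1:ℝ) else 0)
    (fun j => if j = ⟨0, hn⟩ then (1:ℝ) else 0) ∈ Δ (n := n) := by
  refine ⟨_, fun i => by positivity, ?_, rfl⟩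
  rw [Finset.sum_eq_single ⟨0, hn⟩] <;> simp +contextual

lemma convexHull_Δ_subset_S (hn : 0 < n) : convexHull ℝ (Δ (n := n)) ⊆ S n := by
  intro C hC
  obtain ⟨ι, hft, z, w, hrange, hAI, hpos, hsum1, hsumC⟩ :=
    eq_pos_convex_span_of_mem_convexHull hC
  have hcard : Fintype.card ι ≤ N n := by
    show Fintype.card ι ≤ n * n + 1
    refine (hAI.card_le_finrank_succ).trans ?_
    have h1 : Module.finrank ℝ (Matrix (Fin n) (Fin n) ℝ) = n * n := by
      rw [Module.finrank_matrix]; simp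
    have := Submodule.finrank_le (vectorSpan ℝ (Set.range z))
    rw [h1] at this
    omega
  set m := Fintype.card ι with hm
  let eqv : ι ≃ Fin m := Fintype.equivFin ι
  obtain ⟨d₀, hd₀⟩ : ∃ d₀, d₀ ∈ Δ (n := n) := ⟨_, mem_Δ_default hn⟩
  let w' : Fin (N n) → ℝ := fun j => if h : (j : ℕ) < m then w (eqv.symm ⟨j, h⟩) else 0
  let z' : Fin (N n) → Matrix (Fin n) (Fin n) ℝ :=
    fun j => if h : (j : ℕ) < m then z (eqv.symm ⟨j, h⟩) else d₀
  refine ⟨(w', z'), ⟨⟨fun j => ?_, ?_⟩, fun j _ => ?_⟩, ?_⟩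
  · by_cases h : (j : ℕ) < m
    · simp only [w', dif_pos h]; exact (hpos _).le
    · simp [w', dif_neg h]
  · have h1 : ∑ j, w' j = ∑ i : Fin m, w (eqv.symm i) :=
      pad_sum hcard (fun i => w (eqv.symm i))
    have h2 : ∑ i : Fin m, w (eqv.symm i) = ∑ i : ι, w i := Equiv.sum_comp eqv.symm w
    show ∑ j, w' j = 1
    rw [h1, h2, hsum1]
  · by_cases h : (j : ℕ) < m
    · simp only [z', dif_pos h]; exact hrange (Set.mem_range_self _)
    · simpa [z', dif_neg h] using hd₀
  · show ∑ j, w' j • z' j = C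
    have heach : ∀ j : Fin (N n), w' j • z' j =
        if h : (j : ℕ) < m then w (eqv.symm ⟨j, h⟩) • z (eqv.symm ⟨j, h⟩) else 0 := by
      intro j
      by_cases h : (j : ℕ) < m
      · simp [w', z', dif_pos h]
      · simp [w', z', dif_neg h]
    have key : (∑ j : Fin (N n),
        if h : (j : ℕ) < m then w (eqv.symm ⟨j, h⟩) • z (eqv.symm ⟨j, h⟩) else 0)
        = ∑ i : Fin m, w (eqv.symm i) • z (eqv.symm i) :=
      pad_sum hcard (fun i => w (eqv.symm i) • z (eqv.symm i))
    have key2 : ∑ i : Fin m, w (eqv.symm i) • z (eqv.symm i) = ∑ i : ι, w i • z i :=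
      Equiv.sum_comp eqv.symm (fun i => w i • z i)
    rw [Finset.sum_congr rfl fun j _ => heach j, key, key2, hsumC]

lemma S_nonempty (hn : 0 < n) : (S n).Nonempty := by
  refine ⟨_, ⟨(fun _ => (N n : ℝ)⁻¹, fun _ => _), ⟨⟨fun _ => by positivity, ?_⟩,
    fun i _ => mem_Δ_default hn⟩, rfl⟩⟩
  have : ((N n : ℝ)) ≠ 0 := Nat.cast_ne_zero.2 (by simp [N])
  simp [Finset.sum_const, mul_inv_cancel₀ this]

lemma vecMulVec_smul_smul (c : ℝ) (x : Fin n → ℝ) :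
    vecMulVec (c • x) (c • x) = (c * c) • vecMulVec x x := by
  ext i j
  simp [vecMulVec_apply]
  ring

lemma cp_rep (hn : 0 < n) {A : Matrix (Fin n) (Fin n) ℝ} (h : completelyPositive A) :
    ∃ t : ℝ, 0 ≤ t ∧ ∃ C ∈ S n, A = t • C := by
  obtain ⟨m, α, x, hα, hx, rfl⟩ := h
  set s : Fin m → ℝ := fun i => ∑ j, x i j ^ 2 with hs
  set W : Fin m → ℝ := fun i => α i * s i with hW
  have hs0 : ∀ i, 0 ≤ s i := fun i => Finset.sum_nonneg fun j _ => sq_nonneg _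
  have hW0 : ∀ i, 0 ≤ W i := fun i => mul_nonneg (hα i) (hs0 i)
  have hterm0 : ∀ i, W i = 0 → α i • vecMulVec (x i) (x i) = 0 := by
    intro i hWi
    rcases mul_eq_zero.1 hWi with h | h
    · rw [h, zero_smul]
    · have hxz : x i = 0 := by
        funext j
        have : x i j ^ 2 = 0 := by
          have := Finset.sum_eq_zero_iff_of_nonneg (fun j _ => sq_nonneg (x i j)) |>.1 h j
            (Finset.mem_univ j)
          exact this
        exact pow_eq_zero_iff (two_ne_zero) |>.1 this
      rw [hxz]
      ext a b
      simp [vecMulVec_apply]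
  set t : ℝ := ∑ i, W i with ht
  have ht0 : 0 ≤ t := Finset.sum_nonneg fun i _ => hW0 i
  rcases eq_or_lt_of_le ht0 with hteq | htpos
  · have : ∀ i, W i = 0 := by
      intro i
      have := (Finset.sum_eq_zero_iff_of_nonneg fun i _ => hW0 i).1 hteq.symm i (Finset.mem_univ i)
      exact this
    obtain ⟨C, hC⟩ := S_nonempty hn
    refine ⟨0, le_refl _, C, hC, ?_⟩
    rw [zero_smul]
    exact Finset.sum_eq_zero fun i _ => hterm0 i (this i)
  · set u : Fin m → Fin n → ℝ := fun i =>
      if h : s i = 0 then (fun j => if j = ⟨0, hn⟩ then (1:ℝ) else 0)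
      else (Real.sqrt (s i))⁻¹ • x i with hu
    have hDmem : ∀ i, vecMulVec (u i) (u i) ∈ Δ (n := n) := by
      intro i
      by_cases h : s i = 0
      · simp only [hu, dif_pos h]
        exact mem_Δ_default hn
      · simp only [hu, dif_neg h]
        refine ⟨_, fun j => mul_nonneg (inv_nonneg.2 (Real.sqrt_nonneg _)) (hx i j), ?_, rfl⟩
        have hsq : Real.sqrt (s i) ^ 2 = s i := Real.sq_sqrt (hs0 i)
        have hsne : Real.sqrt (s i) ≠ 0 := by
          intro hc
          exact h (by rw [← hsq, hc]; ring)
        calc ∑ j, ((Real.sqrt (s i))⁻¹ • x i) j ^ 2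
            = (Real.sqrt (s i))⁻¹ ^ 2 * ∑ j, x i j ^ 2 := by
              rw [Finset.mul_sum]
              exact Finset.sum_congr rfl fun j _ => by simp [Pi.smul_apply]; ring
          _ = 1 := by
              have : ∑ j, x i j ^ 2 = s i := rfl
              rw [this, inv_pow, hsq]
              field_simp [h]
    have hWD : ∀ i, W i • vecMulVec (u i) (u i) = α i • vecMulVec (x i) (x i) := by
      intro i
      by_cases h : s i = 0
      · rw [hterm0 i (by simp [hW, h]), show W i = 0 by simp [hW, h], zero_smul]
      · simp only [hu, dif_neg h]
        rw [vecMulVec_smul_smul, smul_smul]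
        have hsq : Real.sqrt (s i) * Real.sqrt (s i) = s i := Real.mul_self_sqrt (hs0 i)
        congr 1
        show α i * s i * ((√(s i))⁻¹ * (√(s i))⁻¹) = α i
        rw [← mul_inv, hsq]
        field_simp [h]
    have hsum : ∑ i, W i • vecMulVec (u i) (u i) = ∑ i, α i • vecMulVec (x i) (x i) :=
      Finset.sum_congr rfl fun i _ => hWD i
    have hcm : Finset.univ.centerMass W (fun i => vecMulVec (u i) (u i)) ∈ convexHull ℝ Δ :=
      Finset.centerMass_mem_convexHull _ (fun i _ => hW0 i) (by rw [← ht]; exact htpos)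
        (fun i _ => hDmem i)
    refine ⟨t, ht0, _, convexHull_Δ_subset_S hn hcm, ?_⟩
    rw [Finset.centerMass, smul_smul, ← ht, mul_inv_cancel₀ (ne_of_gt htpos), one_smul, hsum]

lemma continuous_trace' : Continuous (Matrix.trace : Matrix (Fin n) (Fin n) ℝ → ℝ) :=
  continuous_finset_sum _ fun i _ => (continuous_apply i).comp (continuous_apply i)

lemma isClosed_cp : IsClosed {A : Matrix (Fin n) (Fin n) ℝ | completelyPositive A} := by
  rcases Nat.eq_zero_or_pos n with hn | hn
  · subst hn
    have : {A : Matrix (Fin 0) (Fin 0) ℝ | completelyPositive A} = Set.univ :=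
      Set.eq_univ_of_forall fun A => by
        have : A = 0 := Subsingleton.elim _ _
        rw [Set.mem_setOf_eq, this]; exact cp_zero
    rw [this]; exact isClosed_univ
  · letI : SequentialSpace (Matrix (Fin n) (Fin n) ℝ) :=
      inferInstanceAs (SequentialSpace (Fin n → Fin n → ℝ))
    letI : FirstCountableTopology (Matrix (Fin n) (Fin n) ℝ) :=
      inferInstanceAs (FirstCountableTopology (Fin n → Fin n → ℝ))
    rw [← isSeqClosed_iff_isClosed]
    intro u A hu hA
    choose t ht C hC hut using fun k => cp_rep hn (hu k)
    obtain ⟨Cl, hCl, φ, hφ, hφC⟩ := isCompact_S.tendsto_subseq hC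
    have htr : Filter.Tendsto (fun k => t k) Filter.atTop (nhds (Matrix.trace A)) := by
      have h1 : Filter.Tendsto (fun k => Matrix.trace (u k)) Filter.atTop
          (nhds (Matrix.trace A)) := (continuous_trace'.tendsto A).comp hA
      convert h1 using 2 with k
      rw [hut k, Matrix.trace_smul, trace_eq_one_of_mem_S (hC k), smul_eq_mul, mul_one]
    have htrφ : Filter.Tendsto (fun k => t (φ k)) Filter.atTop (nhds (Matrix.trace A)) :=
      htr.comp hφ.tendsto_atTop
    have hlim : Filter.Tendsto (fun k => u (φ k)) Filter.atTop
        (nhds (Matrix.trace A • Cl)) := by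
      have := htrφ.smul hφC
      convert this using 2 with k
      exact hut (φ k)
    have hAeq : A = Matrix.trace A • Cl :=
      tendsto_nhds_unique (hA.comp hφ.tendsto_atTop) hlim
    have htA : 0 ≤ Matrix.trace A :=
      le_of_tendsto_of_tendsto' tendsto_const_nhds htr fun k => ht k
    rw [Set.mem_setOf_eq, hAeq]
    exact cp_smul htA (cp_of_mem_S hCl)

noncomputable def e (n : ℕ) : Matrix (Fin n) (Fin n) ℝ ≃ₗ[ℝ] EuclideanSpace ℝ (Fin n × Fin n) :=
  (LinearEquiv.curry ℝ ℝ (Fin n) (Fin n)).symm.trans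
    (WithLp.linearEquiv 2 ℝ ((Fin n) × (Fin n) → ℝ)).symm

lemma inner_e (A B : Matrix (Fin n) (Fin n) ℝ) :
    (inner ℝ (e n A) (e n B) : ℝ) = ∑ i, ∑ j, A i j * B i j := by
  rw [PiLp.inner_apply]
  simp only [RCLike.inner_apply, conj_trivial]
  rw [Fintype.sum_prod_type]
  exact Finset.sum_congr rfl fun i _ => Finset.sum_congr rfl fun j _ => mul_comm (B i j) (A i j)

noncomputable def Kcone (n : ℕ) : ConvexCone ℝ (EuclideanSpace ℝ (Fin n × Fin n)) where
  carrier := e n '' {A | completelyPositive A}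
  smul_mem' := by
    rintro c hc z ⟨A, hA, rfl⟩
    exact ⟨c • A, cp_smul hc.le hA, map_smul _ _ _⟩
  add_mem' := by
    rintro z ⟨A, hA, rfl⟩ w ⟨B, hB, rfl⟩
    exact ⟨A + B, cp_add hA hB, map_add _ _ _⟩

lemma isClosed_Kcone : IsClosed ((Kcone n : Set (EuclideanSpace ℝ (Fin n × Fin n)))) := by
  have himg : (Kcone n : Set (EuclideanSpace ℝ (Fin n × Fin n)))
      = (e n).symm ⁻¹' {A | completelyPositive A} := by
    show e n '' {A | completelyPositive A} = _
    rw [LinearEquiv.image_eq_preimage_symm]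
  rw [himg]
  letI : IsTopologicalAddGroup (Matrix (Fin n) (Fin n) ℝ) :=
    inferInstanceAs (IsTopologicalAddGroup (Fin n → Fin n → ℝ))
  letI : ContinuousSMul ℝ (Matrix (Fin n) (Fin n) ℝ) :=
    inferInstanceAs (ContinuousSMul ℝ (Fin n → Fin n → ℝ))
  have hcont : Continuous ((e n).symm : EuclideanSpace ℝ (Fin n × Fin n) →
      Matrix (Fin n) (Fin n) ℝ) :=
    LinearMap.continuous_of_finiteDimensional ((e n).symm.toLinearMap)
  exact isClosed_cp.preimage hcont

lemma dot_transpose (x : Fin n → ℝ) (B : Matrix (Fin n) (Fin n) ℝ) :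
    x ⬝ᵥ Bᵀ.mulVec x = x ⬝ᵥ B.mulVec x := by
  simp only [dotProduct, Matrix.mulVec, Matrix.transpose_apply, Finset.mul_sum]
  rw [Finset.sum_comm]
  exact Finset.sum_congr rfl fun i _ => Finset.sum_congr rfl fun j _ => by ring

end CPAux

open CPAux in
theorem cp_eq_dual_cop {n : ℕ} :
    {A : Matrix (Fin n) (Fin n) ℝ | completelyPositive A} =
      {A | A.IsSymm ∧ ∀ B : Matrix (Fin n) (Fin n) ℝ,
        B.IsSymm → copositive B → 0 ≤ Matrix.trace (A * B)} := by
  ext A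
  simp only [Set.mem_setOf_eq]
  constructor
  · intro h
    refine ⟨cp_isSymm h, fun B _ hB => ?_⟩
    obtain ⟨m, α, x, hα, hx, rfl⟩ := h
    rw [Finset.sum_mul, Matrix.trace_sum]
    refine Finset.sum_nonneg fun i _ => ?_
    rw [smul_mul_assoc, Matrix.trace_smul, trace_vmv]
    exact smul_nonneg (hα i) (hB (x i) (hx i))
  · rintro ⟨hsym, hdual⟩
    have hKdd : (ProperCone.innerDual (ProperCone.innerDual (Kcone n : Set (EuclideanSpace ℝ (Fin n × Fin n))) :
        Set (EuclideanSpace ℝ (Fin n × Fin n))) : Set (EuclideanSpace ℝ (Fin n × Fin n))) = (Kcone n : Set (EuclideanSpace ℝ (Fin n × Fin n))) := by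
      have := ProperCone.innerDual_innerDual (⟨(Kcone n).toPointedCone ⟨0, cp_zero, map_zero _⟩,
        isClosed_Kcone⟩ : ProperCone ℝ (EuclideanSpace ℝ (Fin n × Fin n)))
      exact congrArg (fun P : ProperCone ℝ (EuclideanSpace ℝ (Fin n × Fin n)) => (P : Set (EuclideanSpace ℝ (Fin n × Fin n)))) this
    have hmem : e n A ∈ (ProperCone.innerDual (ProperCone.innerDual (Kcone n : Set (EuclideanSpace ℝ (Fin n × Fin n))) :
        Set (EuclideanSpace ℝ (Fin n × Fin n))) : Set (EuclideanSpace ℝ (Fin n × Fin n))) := by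
      rw [SetLike.mem_coe, ProperCone.mem_innerDual]
      intro y hy
      rw [SetLike.mem_coe, ProperCone.mem_innerDual] at hy
      set B : Matrix (Fin n) (Fin n) ℝ := (e n).symm y with hB
      have hyB : y = e n B := by rw [hB, LinearEquiv.apply_symm_apply]
      have hcop : copositive B := by
        intro x hx
        have hcp : completelyPositive (vecMulVec x x) := by
          refine ⟨1, fun _ => 1, fun _ => x, fun _ => zero_le_one, fun _ => hx, by simp⟩
        have := hy (x := e n (vecMulVec x x)) ⟨_, hcp, rfl⟩
        rw [hyB, inner_e] at this
        rw [← trace_vmv]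
        calc (0:ℝ) ≤ ∑ i, ∑ j, vecMulVec x x i j * B i j := this
          _ = Matrix.trace (vecMulVec x x * B) := by
              simp only [Matrix.trace, Matrix.diag, Matrix.mul_apply, vecMulVec_apply]
              rw [Finset.sum_comm]
              exact Finset.sum_congr rfl fun i _ => Finset.sum_congr rfl fun j _ => by ring
      set Bs : Matrix (Fin n) (Fin n) ℝ := (2⁻¹ : ℝ) • (B + Bᵀ) with hBs
      have hBsSymm : Bs.IsSymm := by
        unfold Matrix.IsSymm
        rw [hBs, Matrix.transpose_smul, Matrix.transpose_add, Matrix.transpose_transpose,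
          add_comm]
      have hBscop : copositive Bs := by
        intro x hx
        have h1 : x ⬝ᵥ Bs.mulVec x = 2⁻¹ * (x ⬝ᵥ B.mulVec x + x ⬝ᵥ Bᵀ.mulVec x) := by
          rw [hBs, Matrix.smul_mulVec, dotProduct_smul, Matrix.add_mulVec,
            dotProduct_add]
          rfl
        rw [h1, dot_transpose]
        have := hcop x hx
        linarith
      have htr := hdual Bs hBsSymm hBscop
      have hkey : Matrix.trace (A * Bs) = (inner ℝ y (e n A) : ℝ) := by
        rw [hyB, real_inner_comm, inner_e]
        have hfrob : ∀ C : Matrix (Fin n) (Fin n) ℝ,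
            Matrix.trace (A * C) = ∑ i, ∑ j, A i j * C j i := by
          intro C
          simp only [Matrix.trace, Matrix.diag, Matrix.mul_apply]
        rw [hfrob]
        rw [hBs]
        have hexp : ∀ i j, A i j * ((2⁻¹ : ℝ) • (B + Bᵀ)) j i
            = 2⁻¹ * (A i j * B j i) + 2⁻¹ * (A i j * B i j) := by
          intro i j
          simp only [Matrix.smul_apply, Matrix.add_apply, Matrix.transpose_apply,
            smul_eq_mul]
          ring
        simp only [hexp, Finset.sum_add_distrib, ← Finset.mul_sum]
        have hswap : ∑ i, ∑ j, A i j * B j i = ∑ i, ∑ j, A i j * B i j := by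
          rw [Finset.sum_comm]
          refine Finset.sum_congr rfl fun i _ => Finset.sum_congr rfl fun j _ => ?_
          rw [hsym.apply i j]
        rw [hswap]
        ring
      rw [← hkey]
      exact htr
    rw [hKdd] at hmem
    obtain ⟨A', hA', hAe⟩ := hmem
    have : A' = A := (e n).injective hAe
    rwa [← this]
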